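/- Let a < b be real numbers, t > 0, and let μ be the Borel measure on ℝ with density t·1_{[a,b]}. Let n be a positive integer and let β = {a₁ < a₂ < ⋯ < a_n < b} be a set of n + 1 points that minimizes the distortion error V(μ; ·) among all (n + 1)-point subsets of ℝ that contain the endpoint b. Then the points a₁, …, a_n are equally spaced with a_{j+1} − a_j = 2(a₁ − a) for all 1 ≤ j ≤ n − 1 and b − a_n = 2(a₁ − a); equivalently, a₁, …, a_n are uniformly distributed over the closed interval [a, (a_n + b)/2] in the sense that a_j = a + (2j − 1)((a_n + b)/2 − a)/(2n) for 1 ≤ j ≤ n. -/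

import Mathlib

open MeasureTheory Set

/-- Distortion error of a set `α` with respect to the measure `Q`. -/
noncomputable def distortion (Q : Measure ℝ) (α : Set ℝ) : ℝ :=
  ∫ x, sInf ((fun a => (x - a) ^ 2) '' α) ∂Q

/-- The `n`-th quantization error of the measure `Q`. -/
noncomputable def quantErr (Q : Measure ℝ) (n : ℕ) : ℝ :=
  sInf { v : ℝ | ∃ α : Set ℝ, α.Finite ∧ α.Nonempty ∧ α.ncard ≤ n ∧ v = distortion Q α }

/-- `α` is an optimal set of `n`-means for `Q`. -/
def IsOptimal (Q : Measure ℝ) (n : ℕ) (α : Set ℝ) : Prop :=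
  α.Finite ∧ 1 ≤ α.ncard ∧ α.ncard ≤ n ∧ distortion Q α = quantErr Q n

/-- The measure on `ℝ` with constant density `t` on `[a, b]` and `0` elsewhere. -/
noncomputable def unif (a b t : ℝ) : Measure ℝ :=
  volume.withDensity fun x => ENNReal.ofReal ((Icc a b).indicator (fun _ => t) x)

/-! Sort the points as `c 0 < ⋯ < c n = b`. On each gap `[c j, c (j+1)]` the nearest point is the
nearer endpoint, so as long as `c 0` still serves part of `[a, b]` (`2a ≤ c 0 + c 1`) the
distortion is `t * ((c 0 - a)³/3 + ∑ j < n, (c (j+1) - c j)³/12)`. Optimality forces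
`2a ≤ c 0 + c 1`: otherwise replacing `c 0` by an unused point of `[a, b]` lowers the distortion
strictly. Moving `c 0` alone, or one interior `c j` alone, changes only two terms of this formula,
and the resulting one-variable cubic inequalities force `3 c 0 = 2a + c 1` and
`2 c j = c (j-1) + c (j+1)`, i.e. all gaps equal `2 (c 0 - a)`. -/

noncomputable def nearestSqDist (α : Set ℝ) (x : ℝ) : ℝ :=
  sInf ((fun a => (x - a) ^ 2) '' α)

section nearestSqDist

variable {α : Set ℝ} {x y r : ℝ}

lemma nearestSqDist_le (hy : y ∈ α) : nearestSqDist α x ≤ (x - y) ^ 2 :=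
  csInf_le ⟨0, by rintro _ ⟨_, _, rfl⟩; positivity⟩ ⟨y, hy, rfl⟩

lemma le_nearestSqDist (hα : α.Nonempty) (h : ∀ y ∈ α, r ≤ (x - y) ^ 2) :
    r ≤ nearestSqDist α x :=
  le_csInf (hα.image _) (by rintro _ ⟨y, hy, rfl⟩; exact h y hy)

lemma nearestSqDist_pos (hfin : α.Finite) (hα : α.Nonempty) (hx : x ∉ α) :
    0 < nearestSqDist α x := by
  obtain ⟨y, hy, hmin⟩ := (hα.image (fun a => (x - a) ^ 2)).csInf_mem (hfin.image _)
  rw [nearestSqDist, ← hmin]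
  have : x - y ≠ 0 := sub_ne_zero.2 fun h => hx (h ▸ hy)
  positivity

lemma continuous_nearestSqDist (hfin : α.Finite) (hα : α.Nonempty) :
    Continuous (nearestSqDist α) := by
  have hne : hfin.toFinset.Nonempty := hfin.toFinset_nonempty.2 hα
  have h : nearestSqDist α = fun x => hfin.toFinset.inf' hne fun a => (x - a) ^ 2 := by
    ext x
    rw [nearestSqDist, Finset.inf'_eq_csInf_image, hfin.coe_toFinset]
  rw [h]
  exact Continuous.finset_inf'_apply hne fun a _ => by fun_prop

end nearestSqDist

lemma distortion_unif {a b t : ℝ} (hab : a ≤ b) (ht : 0 ≤ t) (α : Set ℝ) :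
    distortion (unif a b t) α = t * ∫ x in a..b, nearestSqDist α x := by
  have hmeas : Measurable fun x => ENNReal.ofReal ((Icc a b).indicator (fun _ => t) x) :=
    (measurable_const.indicator measurableSet_Icc).ennreal_ofReal
  rw [distortion, unif, integral_withDensity_eq_integral_toReal_smul hmeas
    (ae_of_all _ fun _ => ENNReal.ofReal_lt_top)]
  have hind : (fun x => (ENNReal.ofReal ((Icc a b).indicator (fun _ => t) x)).toReal •
      sInf ((fun y => (x - y) ^ 2) '' α)) = (Icc a b).indicator fun x => t * nearestSqDist α x := by
    ext x
    by_cases hx : x ∈ Icc a b <;> simp [hx, ENNReal.toReal_ofReal ht, nearestSqDist]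
  rw [hind, integral_indicator measurableSet_Icc, integral_Icc_eq_integral_Ioc,
    ← intervalIntegral.integral_of_le hab, intervalIntegral.integral_const_mul]

lemma integral_sub_sq (u v c : ℝ) :
    ∫ x in u..v, (x - c) ^ 2 = ((v - c) ^ 3 - (u - c) ^ 3) / 3 := by
  rw [intervalIntegral.integral_comp_sub_right (fun x => x ^ 2), integral_pow]
  ring

lemma integral_min_sub_sq {u v : ℝ} (huv : u ≤ v) :
    ∫ x in u..v, min ((x - u) ^ 2) ((x - v) ^ 2) = (v - u) ^ 3 / 12 := by
  have hcont : Continuous fun x : ℝ => min ((x - u) ^ 2) ((x - v) ^ 2) := by fun_prop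
  rw [← intervalIntegral.integral_add_adjacent_intervals (b := (u + v) / 2)
    (hcont.intervalIntegrable _ _) (hcont.intervalIntegrable _ _)]
  rw [intervalIntegral.integral_congr (g := fun x => (x - u) ^ 2), integral_sub_sq,
    intervalIntegral.integral_congr (g := fun x => (x - v) ^ 2), integral_sub_sq]
  · ring
  · intro x hx
    rw [uIcc_of_le (by linarith)] at hx
    exact min_eq_right (by nlinarith [hx.1, hx.2])
  · intro x hx
    rw [uIcc_of_le (by linarith)] at hx
    exact min_eq_left (by nlinarith [hx.1, hx.2])

section Sorted

variable {c : ℕ → ℝ} {n : ℕ} {x : ℝ}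

lemma ncard_image_Iic (hc : StrictMono c) : (c '' Iic n).ncard = n + 1 := by
  rw [ncard_image_of_injective _ hc.injective, ← Finset.coe_Iic, ncard_coe_finset, Nat.card_Iic]

lemma nearestSqDist_image_Iic_of_le_midpoint (hc : Monotone c) (hx : 2 * x ≤ c 0 + c 1) :
    nearestSqDist (c '' Iic n) x = (x - c 0) ^ 2 := by
  refine le_antisymm (nearestSqDist_le ⟨0, Nat.zero_le n, rfl⟩)
    (le_nearestSqDist ⟨c 0, 0, Nat.zero_le n, rfl⟩ ?_)
  rintro _ ⟨i, -, rfl⟩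
  rcases i with _ | i
  · exact le_rfl
  · have h01 := hc (Nat.zero_le 1)
    have h1i := hc (Nat.le_add_left 1 i)
    nlinarith

lemma nearestSqDist_image_Iic_of_mem_Icc (hc : Monotone c) {j : ℕ} (hj : j < n)
    (hx : x ∈ Icc (c j) (c (j + 1))) :
    nearestSqDist (c '' Iic n) x = min ((x - c j) ^ 2) ((x - c (j + 1)) ^ 2) := by
  refine le_antisymm (le_min (nearestSqDist_le ⟨j, hj.le, rfl⟩) (nearestSqDist_le ⟨j + 1, hj, rfl⟩))
    (le_nearestSqDist ⟨c 0, 0, Nat.zero_le n, rfl⟩ ?_)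
  rintro _ ⟨i, -, rfl⟩
  rcases le_or_gt i j with hij | hij
  · have := hc hij
    exact (min_le_left _ _).trans (by nlinarith [hx.1])
  · have := hc (Nat.succ_le_of_lt hij)
    exact (min_le_right _ _).trans (by nlinarith [hx.2])

end Sorted

noncomputable def gapCost (a : ℝ) (n : ℕ) (c : ℕ → ℝ) : ℝ :=
  (c 0 - a) ^ 3 / 3 + ∑ j ∈ Finset.range n, (c (j + 1) - c j) ^ 3 / 12

lemma distortion_unif_image_Iic {a b t : ℝ} {c : ℕ → ℝ} {n : ℕ} (hab : a ≤ b) (ht : 0 ≤ t)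
    (hc : Monotone c) (hcn : c n = b) (h2a : 2 * a ≤ c 0 + c 1) :
    distortion (unif a b t) (c '' Iic n) = t * gapCost a n c := by
  subst hcn
  have hcont : Continuous (nearestSqDist (c '' Iic n)) :=
    continuous_nearestSqDist ((finite_Iic n).image c) ⟨c 0, 0, Nat.zero_le n, rfl⟩
  rw [distortion_unif hab ht, gapCost,
    ← intervalIntegral.integral_add_adjacent_intervals (b := c 0)
      (hcont.intervalIntegrable _ _) (hcont.intervalIntegrable _ _),
    ← intervalIntegral.sum_integral_adjacent_intervals fun k _ => hcont.intervalIntegrable _ _]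
  congr 2
  · rw [intervalIntegral.integral_congr (g := fun x => (x - c 0) ^ 2), integral_sub_sq]
    · ring
    · intro x hx
      refine nearestSqDist_image_Iic_of_le_midpoint hc ?_
      have := hc (Nat.zero_le 1)
      rcases le_total a (c 0) with h | h
      · rw [uIcc_of_le h] at hx; linarith [hx.2]
      · rw [uIcc_of_ge h] at hx; linarith [hx.2]
  · refine Finset.sum_congr rfl fun j hj => ?_
    have hle := hc j.le_succ
    rw [intervalIntegral.integral_congr (g := fun x => min ((x - c j) ^ 2) ((x - c (j + 1)) ^ 2)),
      integral_min_sub_sq hle]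
    intro x hx
    rw [uIcc_of_le hle] at hx
    exact nearestSqDist_image_Iic_of_mem_Icc hc (Finset.mem_range.1 hj) hx

section Update

open Function

variable {c : ℕ → ℝ} {n k : ℕ} {s : ℝ}

lemma strictMono_update (hc : StrictMono c) (hlo : ∀ j, j + 1 = k → c j < s)
    (hhi : s < c (k + 1)) : StrictMono (update c k s) := by
  refine strictMono_nat_of_lt_succ fun j => ?_
  rcases eq_or_ne (j + 1) k with rfl | h1
  · simpa [update_of_ne (Nat.succ_ne_self j).symm] using hlo j rfl
  rcases eq_or_ne j k with rfl | h2
  · simpa [update_of_ne (Nat.succ_ne_self j)] using hhi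
  · simpa [update_of_ne h1, update_of_ne h2] using hc j.lt_succ_self

lemma gapCost_update_zero (a : ℝ) (hn : 0 < n) (c : ℕ → ℝ) (s : ℝ) :
    gapCost a n (update c 0 s) = gapCost a n c
      + ((s - a) ^ 3 / 3 + (c 1 - s) ^ 3 / 12) - ((c 0 - a) ^ 3 / 3 + (c 1 - c 0) ^ 3 / 12) := by
  obtain ⟨m, rfl⟩ : ∃ m, n = m + 1 := ⟨n - 1, by omega⟩
  simp only [gapCost, Finset.sum_range_succ', update_self, update_of_ne (Nat.succ_ne_zero _)]
  ring

lemma gapCost_update_succ (a : ℝ) {i : ℕ} (hi : i + 1 < n) (c : ℕ → ℝ) (s : ℝ) :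
    gapCost a n (update c (i + 1) s) = gapCost a n c
      + ((s - c i) ^ 3 / 12 + (c (i + 2) - s) ^ 3 / 12)
      - ((c (i + 1) - c i) ^ 3 / 12 + (c (i + 2) - c (i + 1)) ^ 3 / 12) := by
  have hdiff : ∑ j ∈ Finset.range n, ((update c (i + 1) s (j + 1) - update c (i + 1) s j) ^ 3 / 12
      - (c (j + 1) - c j) ^ 3 / 12)
      = ((s - c i) ^ 3 / 12 - (c (i + 1) - c i) ^ 3 / 12)
        + ((c (i + 2) - s) ^ 3 / 12 - (c (i + 2) - c (i + 1)) ^ 3 / 12) := by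
    rw [Finset.sum_eq_add_of_mem i (i + 1) (Finset.mem_range.2 (by omega))
      (Finset.mem_range.2 hi) (by omega)]
    · simp
    · intro j _ hj
      simp [hj.1, hj.2]
  rw [Finset.sum_sub_distrib] at hdiff
  simp only [gapCost, update_of_ne (Nat.succ_ne_zero i).symm]
  linarith

end Update

lemma eq_of_mul_sq_nonpos {d y : ℝ} (hd : 0 < d) (h : d * y ^ 2 ≤ 0) : y = 0 :=
  pow_eq_zero_iff two_ne_zero |>.1 <|
    le_antisymm (nonpos_of_mul_nonpos_right (by linarith) hd) (sq_nonneg y)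

lemma two_mul_eq_add_of_cube_add_cube_le {u v x : ℝ} (huv : u < v)
    (h : (x - u) ^ 3 + (v - x) ^ 3 ≤ ((u + v) / 2 - u) ^ 3 + (v - (u + v) / 2) ^ 3) :
    2 * x = u + v := by
  have key : (x - u) ^ 3 + (v - x) ^ 3 - (((u + v) / 2 - u) ^ 3 + (v - (u + v) / 2) ^ 3)
      = 3 / 4 * (v - u) * (2 * x - u - v) ^ 2 := by ring
  linarith [eq_of_mul_sq_nonpos (y := 2 * x - u - v) (by linarith : 0 < 3 / 4 * (v - u))
    (by linarith)]

lemma three_mul_eq_of_edge_cost_le {a v x : ℝ} (hav : a < v) (h2a : 2 * a ≤ x + v)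
    (h : (x - a) ^ 3 / 3 + (v - x) ^ 3 / 12
      ≤ ((2 * a + v) / 3 - a) ^ 3 / 3 + (v - (2 * a + v) / 3) ^ 3 / 12) :
    3 * x = 2 * a + v := by
  have key : (x - a) ^ 3 / 3 + (v - x) ^ 3 / 12
      - (((2 * a + v) / 3 - a) ^ 3 / 3 + (v - (2 * a + v) / 3) ^ 3 / 12)
      = (3 * x + 5 * v - 8 * a) / 108 * (3 * x - 2 * a - v) ^ 2 := by ring
  linarith [eq_of_mul_sq_nonpos (y := 3 * x - 2 * a - v)
    (by linarith : 0 < (3 * x + 5 * v - 8 * a) / 108) (by linarith)]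

lemma distortion_unif_lt_of_le_of_lt {a b t : ℝ} {α β : Set ℝ} (hab : a < b) (ht : 0 < t)
    (hβ : β.Finite) (hβne : β.Nonempty) (hα : α.Finite) (hαne : α.Nonempty)
    (hle : ∀ x ∈ Icc a b, nearestSqDist β x ≤ nearestSqDist α x)
    (hlt : ∃ z ∈ Icc a b, nearestSqDist β z < nearestSqDist α z) :
    distortion (unif a b t) β < distortion (unif a b t) α := by
  rw [distortion_unif hab.le ht.le, distortion_unif hab.le ht.le]
  exact mul_lt_mul_of_pos_left (intervalIntegral.integral_lt_integral_of_continuousOn_of_le_of_exists_lt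
    hab (continuous_nearestSqDist hβ hβne).continuousOn (continuous_nearestSqDist hα hαne).continuousOn
    (fun x hx => hle x (Ioc_subset_Icc_self hx)) hlt) ht

def MinimizesDistortionContaining (Q : Measure ℝ) (n : ℕ) (b : ℝ) (α : Set ℝ) : Prop :=
  ∀ γ : Set ℝ, γ.Finite → γ.ncard = n → b ∈ γ → distortion Q α ≤ distortion Q γ

namespace MinimizesDistortionContaining

variable {a b t : ℝ} {c : ℕ → ℝ} {n : ℕ}

/-- If the leftmost point served no part of `[a, b]`, moving it to an unused point of `[a, b]`
would strictly lower the distortion. -/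
lemma two_mul_le_add (hab : a < b) (ht : 0 < t) (hn : 0 < n) (hc : StrictMono c) (hcn : c n = b)
    (hmin : MinimizesDistortionContaining (unif a b t) (n + 1) b (c '' Iic n)) :
    2 * a ≤ c 0 + c 1 := by
  by_contra! h
  have hfin : (c '' Iic n).Finite := (finite_Iic n).image c
  have hmem : ∀ i ≤ n, c i ∈ c '' Iic n := fun i hi => mem_image_of_mem c hi
  obtain ⟨z, hz, hzα⟩ := (Icc_infinite hab).exists_notMem_finite hfin
  set γ := insert z (c '' Iic n \ {c 0})
  have hγfin : γ.Finite := hfin.sdiff.insert z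
  have hγ : ∀ i, 0 < i → i ≤ n → c i ∈ γ := fun i hi hin =>
    mem_insert_of_mem _ ⟨hmem i hin, (hc hi).ne'⟩
  have hcard : γ.ncard = n + 1 := by
    rw [ncard_insert_of_notMem (fun h => hzα h.1) hfin.sdiff,
      ncard_sdiff_singleton_of_mem (hmem 0 (Nat.zero_le n)), ncard_image_Iic hc]
    omega
  refine (hmin γ hγfin hcard (hcn ▸ hγ n hn le_rfl)).not_gt
    (distortion_unif_lt_of_le_of_lt hab ht hγfin ⟨z, mem_insert _ _⟩ hfin
      ⟨c 0, hmem 0 (Nat.zero_le n)⟩ (fun x hx => ?_) ⟨z, hz, ?_⟩)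
  · refine le_nearestSqDist ⟨c 0, hmem 0 (Nat.zero_le n)⟩ ?_
    rintro _ ⟨i, hi, rfl⟩
    rcases i with _ | i
    · have := hc (zero_lt_one' ℕ)
      exact (nearestSqDist_le (hγ 1 one_pos hn)).trans (by nlinarith [hx.1])
    · exact nearestSqDist_le (hγ _ i.succ_pos hi)
  · exact (nearestSqDist_le (mem_insert z _)).trans_lt
      (by simpa using nearestSqDist_pos hfin ⟨c 0, hmem 0 (Nat.zero_le n)⟩ hzα)

lemma gapCost_le (hab : a < b) (ht : 0 < t) (hc : Monotone c) (hcn : c n = b)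
    (h2a : 2 * a ≤ c 0 + c 1)
    (hmin : MinimizesDistortionContaining (unif a b t) (n + 1) b (c '' Iic n))
    {c' : ℕ → ℝ} (hc' : StrictMono c') (hc'n : c' n = b) (h2a' : 2 * a ≤ c' 0 + c' 1) :
    gapCost a n c ≤ gapCost a n c' := by
  have h := hmin (c' '' Iic n) ((finite_Iic n).image c') (ncard_image_Iic hc')
    (hc'n ▸ mem_image_of_mem c' (mem_Iic.2 le_rfl))
  rw [distortion_unif_image_Iic hab.le ht.le hc hcn h2a,
    distortion_unif_image_Iic hab.le ht.le hc'.monotone hc'n h2a'] at h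
  exact le_of_mul_le_mul_left h ht

lemma three_mul_eq (hab : a < b) (ht : 0 < t) (hn : 0 < n) (hc : StrictMono c)
    (hcn : c n = b) (h2a : 2 * a ≤ c 0 + c 1)
    (hmin : MinimizesDistortionContaining (unif a b t) (n + 1) b (c '' Iic n)) :
    3 * c 0 = 2 * a + c 1 := by
  have h01 : c 0 < c 1 := hc one_pos
  have hc' := strictMono_update hc (k := 0) (s := (2 * a + c 1) / 3)
    (fun j hj => absurd hj j.succ_ne_zero) (by rw [zero_add]; linarith)
  have h := hmin.gapCost_le hab ht hc.monotone hcn h2a hc'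
    (by rw [Function.update_of_ne hn.ne']; exact hcn)
    (by rw [Function.update_self, Function.update_of_ne one_ne_zero]; linarith)
  rw [gapCost_update_zero a hn] at h
  exact three_mul_eq_of_edge_cost_le (by linarith) h2a (by linarith)

lemma two_mul_eq_add (hab : a < b) (ht : 0 < t) (hc : StrictMono c) (hcn : c n = b)
    (ha : a < c 0) (hmin : MinimizesDistortionContaining (unif a b t) (n + 1) b (c '' Iic n))
    {i : ℕ} (hi : i + 1 < n) :
    2 * c (i + 1) = c i + c (i + 2) := by
  have hi2 : c i < c (i + 2) := hc (by omega)
  have hc' := strictMono_update hc (k := i + 1) (s := (c i + c (i + 2)) / 2)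
    (fun j hj => by cases Nat.succ_injective hj; linarith) (by linarith)
  have h := hmin.gapCost_le hab ht hc.monotone hcn (by linarith [hc one_pos]) hc'
    (by rw [Function.update_of_ne (by omega)]; exact hcn)
    (by
      have h01' := hc' (zero_lt_one' ℕ)
      rw [Function.update_of_ne (Nat.succ_ne_zero i).symm] at h01' ⊢
      linarith)
  rw [gapCost_update_succ a hi] at h
  exact two_mul_eq_add_of_cube_add_cube_le hi2 (by linarith)

end MinimizesDistortionContaining

lemma eq_add_mul_of_three_mul_eq_of_two_mul_eq_add {a : ℝ} {c : ℕ → ℝ} {n : ℕ}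
    (h0 : 3 * c 0 = 2 * a + c 1) (hmid : ∀ i, i + 1 < n → 2 * c (i + 1) = c i + c (i + 2)) :
    ∀ j ≤ n, c j = a + (2 * j + 1) * (c 0 - a) := by
  have hpair : ∀ j, j + 1 ≤ n →
      c j = a + (2 * j + 1) * (c 0 - a) ∧ c (j + 1) = a + (2 * (j + 1 : ℕ) + 1) * (c 0 - a) := by
    intro j
    induction j with
    | zero => intro _; constructor <;> push_cast <;> linarith
    | succ j ih =>
      intro hj
      obtain ⟨ih0, ih1⟩ := ih (by omega)
      refine ⟨ih1, ?_⟩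
      have := hmid j (by omega)
      push_cast at ih0 ih1 ⊢
      linarith
  intro j hj
  rcases j with _ | j
  · simp
  · exact (hpair j hj).2

lemma MinimizesDistortionContaining.eq_add_mul {a b t : ℝ} {c : ℕ → ℝ} {n : ℕ} (hab : a < b)
    (ht : 0 < t) (hn : 0 < n) (hc : StrictMono c) (hcn : c n = b)
    (hmin : MinimizesDistortionContaining (unif a b t) (n + 1) b (c '' Iic n)) :
    ∀ j ≤ n, c j = a + (2 * j + 1) * (c 0 - a) := by
  have h2a := hmin.two_mul_le_add hab ht hn hc hcn
  have h0 := hmin.three_mul_eq hab ht hn hc hcn h2a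
  have ha : a < c 0 := by linarith [hc (zero_lt_one' ℕ)]
  exact eq_add_mul_of_three_mul_eq_of_two_mul_eq_add h0
    fun i hi => hmin.two_mul_eq_add hab ht hc hcn ha hi

/-- `p 0, …, p (n - 1), b`, continued affinely past `b` only so as to be strictly monotone on
all of `ℕ`. -/
noncomputable def seqExtend {n : ℕ} (p : Fin n → ℝ) (b : ℝ) : ℕ → ℝ :=
  fun j => if h : j < n then p ⟨j, h⟩ else b + (j - n)

section seqExtend

variable {n : ℕ} (p : Fin n → ℝ) (b : ℝ)

lemma seqExtend_of_lt {j : ℕ} (h : j < n) : seqExtend p b j = p ⟨j, h⟩ := dif_pos h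

lemma seqExtend_self : seqExtend p b n = b := by simp [seqExtend]

lemma strictMono_seqExtend {p : Fin n → ℝ} (hp : StrictMono p) (hpb : ∀ j, p j < b) :
    StrictMono (seqExtend p b) := by
  refine strictMono_nat_of_lt_succ fun j => ?_
  rcases lt_trichotomy (j + 1) n with h | h | h
  · rw [seqExtend_of_lt p b h, seqExtend_of_lt p b (by omega)]
    exact hp (Fin.mk_lt_mk.2 j.lt_succ_self)
  · rw [seqExtend_of_lt p b (by omega), h, seqExtend_self]
    exact hpb _
  · simp only [seqExtend, dif_neg (by omega : ¬j < n), dif_neg (by omega : ¬j + 1 < n)]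
    push_cast
    linarith

lemma image_seqExtend_Iic : seqExtend p b '' Iic n = range p ∪ {b} := by
  ext x
  simp only [mem_image, mem_Iic, mem_union, mem_range, mem_singleton_iff]
  constructor
  · rintro ⟨j, hj, rfl⟩
    rcases hj.lt_or_eq with h | rfl
    · exact .inl ⟨⟨j, h⟩, (seqExtend_of_lt p b h).symm⟩
    · exact .inr (seqExtend_self p b)
  · rintro (⟨j, rfl⟩ | rfl)
    · exact ⟨j, j.isLt.le, seqExtend_of_lt p _ j.isLt⟩
    · exact ⟨n, le_rfl, seqExtend_self p _⟩

end seqExtend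

theorem stmt_4 (a b t : ℝ) (hab : a < b) (ht : 0 < t) (n : ℕ) (hn : 0 < n)
    (p : Fin n → ℝ) (hmono : StrictMono p) (hlt : ∀ j, p j < b)
    (hmin : ∀ γ : Set ℝ, γ.Finite → γ.ncard = n + 1 → b ∈ γ →
      distortion (unif a b t) (Set.range p ∪ {b}) ≤ distortion (unif a b t) γ) :
    (∀ j : ℕ, (h : j + 1 < n) →
      p ⟨j + 1, h⟩ - p ⟨j, by omega⟩ = 2 * (p ⟨0, hn⟩ - a)) ∧
    b - p ⟨n - 1, by omega⟩ = 2 * (p ⟨0, hn⟩ - a) ∧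
    (∀ j : Fin n, p j =
      a + (2 * ((j : ℕ) : ℝ) + 1) * ((p ⟨n - 1, by omega⟩ + b) / 2 - a) / (2 * n)) := by
  have hc := MinimizesDistortionContaining.eq_add_mul hab ht hn (strictMono_seqExtend b hmono hlt)
    (seqExtend_self p b) (image_seqExtend_Iic p b ▸ hmin)
  have hp : ∀ j (h : j < n), p ⟨j, h⟩ = a + (2 * j + 1) * (p ⟨0, hn⟩ - a) := fun j h => by
    rw [← seqExtend_of_lt p b h, ← seqExtend_of_lt p b hn, hc j h.le]
  have hb : b = a + (2 * n + 1) * (p ⟨0, hn⟩ - a) := by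
    rw [← seqExtend_of_lt p b hn, ← hc n le_rfl, seqExtend_self]
  have hlast : ((n - 1 : ℕ) : ℝ) = n - 1 := Nat.cast_pred hn
  refine ⟨fun j h => ?_, ?_, fun j => ?_⟩
  · rw [hp (j + 1) h, hp j (by omega)]
    push_cast
    ring
  · rw [hp (n - 1) (by omega), hlast]
    linarith
  · rw [hp j j.isLt, hp (n - 1) (by omega), hlast, hb]
    field_simp
    ring
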